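/- For every integer n ≥ 0, the operators 𝐓^{n+1}(𝐈 − 𝐏)(𝐓*)^{n+1} (the covariance operator of the n-times left-integrated pinned Brownian sheet 𝐁^[0ⁿ]) and (𝐈 − 𝐏)𝐓^{n+1}(𝐓*)^{n+1}(𝐈 − 𝐏) (the covariance operator of the centered n-times left-integrated Brownian sheet) on L²([0,1]^d) have the same nonzero eigenvalues with multiplicities. -/

import Mathlib

open MeasureTheory

noncomputable section

/-- Lebesgue measure on the cube `[0,1]^d`, as a measure on `ℝ^d`. -/
def cubeMeasure (d : ℕ) : Measure (Fin d → ℝ) :=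
  Measure.pi fun _ => volume.restrict (Set.Icc (0:ℝ) 1)

/-- `A` and `B` have the same nonzero eigenvalues with multiplicities. -/
def SameNonzeroEigenvalues {H : Type*} [NormedAddCommGroup H] [NormedSpace ℂ H]
    (A B : H →L[ℂ] H) : Prop :=
  ∀ l : ℂ, l ≠ 0 → ∀ m : ℕ, 1 ≤ m →
    Module.rank ℂ (LinearMap.ker (((A - l • 1) ^ m : H →L[ℂ] H) : H →ₗ[ℂ] H)) =
    Module.rank ℂ (LinearMap.ker (((B - l • 1) ^ m : H →L[ℂ] H) : H →ₗ[ℂ] H))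

/-!
The reflection `x ↦ 1 - x` of the cube preserves Lebesgue measure, so composition with it is a
unitary involution `R` of `L²` with `R 𝐓 = 𝐓* R` and `R 𝐏 = 𝐏 R`. Writing `𝐐 = 𝐈 - 𝐏` and
`k = n + 1`, the idempotence of `𝐐` gives `𝐓ᵏ 𝐐 𝐓*ᵏ = (𝐓ᵏ 𝐐)(𝐐 𝐓*ᵏ)`, which has the same nonzero
generalized eigenspaces (up to isomorphism) as `(𝐐 𝐓*ᵏ)(𝐓ᵏ 𝐐) = 𝐐 𝐓*ᵏ 𝐓ᵏ 𝐐`, because for `λ ≠ 0`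
`B` maps `ker (AB - λ)ᵐ` injectively into `ker (BA - λ)ᵐ` and `A` maps it back injectively;
conjugating by `R` turns `𝐐 𝐓*ᵏ 𝐓ᵏ 𝐐` into `𝐐 𝐓ᵏ 𝐓*ᵏ 𝐐`.
-/

namespace Module.End

variable {R M : Type*} [CommRing R] [AddCommGroup M] [Module R M]

theorem rank_ker_le_of_semiconjBy {C F G : Module.End R M} (h : SemiconjBy C F G)
    (hdisj : Disjoint (LinearMap.ker F) (LinearMap.ker C)) :
    Module.rank R (LinearMap.ker F) ≤ Module.rank R (LinearMap.ker G) := by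
  have hmaps : ∀ x ∈ LinearMap.ker F, C x ∈ LinearMap.ker G := fun x hx => by
    rw [LinearMap.mem_ker] at hx ⊢
    rw [← Module.End.mul_apply, ← h.eq, Module.End.mul_apply, hx, map_zero]
  refine LinearMap.rank_le_of_injective (C.restrict hmaps) ?_
  rw [← LinearMap.ker_eq_bot, LinearMap.ker_eq_bot']
  rintro ⟨x, hx⟩ hCx
  have hx0 : x ∈ LinearMap.ker C := by simpa [Subtype.ext_iff] using hCx
  simpa using hdisj.le_bot ⟨hx, hx0⟩

theorem rank_ker_pow_mul_sub_smul_le (A B : Module.End R M) {l : R} (hl : IsUnit l) (m : ℕ) :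
    Module.rank R (LinearMap.ker ((A * B - l • 1) ^ m)) ≤
      Module.rank R (LinearMap.ker ((B * A - l • 1) ^ m)) := by
  have hB : SemiconjBy B (A * B - l • 1) (B * A - l • 1) := by
    simp only [SemiconjBy, mul_sub, sub_mul, mul_smul_comm, smul_mul_assoc, mul_one, one_mul,
      mul_assoc]
  refine rank_ker_le_of_semiconjBy (hB.pow_right m) (Submodule.disjoint_def.mpr fun x hx hBx => ?_)
  -- on `ker B`, the operator `A * B - l • 1` acts as the unit scalar `-l`
  rw [LinearMap.mem_ker] at hBx
  have hpow : ∀ k : ℕ, ((A * B - l • 1) ^ k) x = (-l) ^ k • x := by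
    intro k
    induction k with
    | zero => simp
    | succ k ih =>
      rw [pow_succ, Module.End.mul_apply]
      simp [hBx, ih, pow_succ, mul_smul, smul_comm l]
  rw [LinearMap.mem_ker, hpow] at hx
  exact ((hl.neg.pow m).smul_eq_zero).mp hx

theorem rank_ker_pow_mul_sub_smul_comm (A B : Module.End R M) {l : R} (hl : IsUnit l) (m : ℕ) :
    Module.rank R (LinearMap.ker ((A * B - l • 1) ^ m)) =
      Module.rank R (LinearMap.ker ((B * A - l • 1) ^ m)) :=
  le_antisymm (rank_ker_pow_mul_sub_smul_le A B hl m) (rank_ker_pow_mul_sub_smul_le B A hl m)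

end Module.End

namespace SameNonzeroEigenvalues

variable {H : Type*} [NormedAddCommGroup H] [NormedSpace ℂ H]

theorem symm {A B : H →L[ℂ] H} (h : SameNonzeroEigenvalues A B) :
    SameNonzeroEigenvalues B A :=
  fun l hl m hm => (h l hl m hm).symm

theorem trans {A B C : H →L[ℂ] H} (hAB : SameNonzeroEigenvalues A B)
    (hBC : SameNonzeroEigenvalues B C) : SameNonzeroEigenvalues A C :=
  fun l hl m hm => (hAB l hl m hm).trans (hBC l hl m hm)

theorem mul_comm (A B : H →L[ℂ] H) : SameNonzeroEigenvalues (A * B) (B * A) := by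
  intro l hl m _
  have hcoe : ∀ X Y : H →L[ℂ] H, (((X * Y - l • 1) ^ m : H →L[ℂ] H) : Module.End ℂ H) =
      ((X : Module.End ℂ H) * Y - l • 1) ^ m := fun X Y => by simp
  rw [hcoe, hcoe]
  exact Module.End.rank_ker_pow_mul_sub_smul_comm (A : Module.End ℂ H) B (Ne.isUnit hl) m

theorem of_semiconjBy {U A B : H →L[ℂ] H} (hU : IsUnit U) (h : SemiconjBy U A B) :
    SameNonzeroEigenvalues A B := by
  obtain ⟨u, rfl⟩ := hU
  have hB : B = u * A * ↑u⁻¹ := by rw [h.eq, mul_assoc, Units.mul_inv, mul_one]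
  have hA : A = ↑u⁻¹ * (u * A) := by rw [← mul_assoc, Units.inv_mul, one_mul]
  rw [hB]
  nth_rewrite 1 [hA]
  exact mul_comm _ _

theorem pow_mul_mul_pow_of_semiconjBy {R T T' Q : H →L[ℂ] H} (hR : IsUnit R)
    (hRT : SemiconjBy R T T') (hRT' : SemiconjBy R T' T) (hRQ : Commute R Q)
    (hQ : IsIdempotentElem Q) (k : ℕ) :
    SameNonzeroEigenvalues (T ^ k * Q * T' ^ k) (Q * T ^ k * T' ^ k * Q) := by
  have hsplit : T ^ k * Q * T' ^ k = (T ^ k * Q) * (Q * T' ^ k) := by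
    conv_lhs => rw [← hQ.eq]
    simp only [mul_assoc]
  have hswap : (Q * T' ^ k) * (T ^ k * Q) = Q * T' ^ k * T ^ k * Q := by
    simp only [mul_assoc]
  have hconj : SemiconjBy R (Q * T ^ k * T' ^ k * Q) (Q * T' ^ k * T ^ k * Q) :=
    ((SemiconjBy.mul_right hRQ (hRT.pow_right k)).mul_right (hRT'.pow_right k)).mul_right hRQ
  rw [hsplit]
  exact (mul_comm _ _).trans (hswap ▸ (of_semiconjBy hR hconj).symm)

end SameNonzeroEigenvalues

namespace MeasureTheory.Lp

open scoped ENNReal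

variable {α E : Type*} (𝕜 : Type*) [MeasurableSpace α] {μ : Measure α} [NormedAddCommGroup E]
  [NormedRing 𝕜] [Module 𝕜 E] [IsBoundedSMul 𝕜 E] {p : ℝ≥0∞} [Fact (1 ≤ p)]

abbrev compMeasurePreservingL (σ : α → α) (hσ : MeasurePreserving σ μ μ) :
    Lp E p μ →L[𝕜] Lp E p μ :=
  (compMeasurePreservingₗᵢ 𝕜 σ hσ).toContinuousLinearMap

variable {𝕜}

theorem compMeasurePreservingL_mul_self {σ : α → α} (hσ : MeasurePreserving σ μ μ)
    (hinv : Function.Involutive σ) :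
    compMeasurePreservingL 𝕜 σ hσ * compMeasurePreservingL 𝕜 σ hσ =
      (1 : Lp E p μ →L[𝕜] Lp E p μ) := by
  ext1 u
  show compMeasurePreserving σ hσ (compMeasurePreserving σ hσ u) = u
  rw [← compMeasurePreserving_comp_apply]
  convert compMeasurePreserving_id_apply u
  exact hinv.comp_self

variable [NormedSpace ℝ E]

theorem semiconjBy_compMeasurePreservingL_of_setIntegral {σ : α ≃ᵐ α}
    (hσ : MeasurePreserving σ μ μ) {s s' : α → Set α} (hs : ∀ x, σ ⁻¹' s' (σ x) = s x)
    {A A' : Lp E p μ →L[𝕜] Lp E p μ}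
    (hA : ∀ u : Lp E p μ, ∀ᵐ x ∂μ, A u x = ∫ y in s x, u y ∂μ)
    (hA' : ∀ u : Lp E p μ, ∀ᵐ x ∂μ, A' u x = ∫ y in s' x, u y ∂μ) :
    SemiconjBy (compMeasurePreservingL 𝕜 σ hσ) A' A := by
  refine ContinuousLinearMap.ext fun u => Lp.ext ?_
  have hcomp : ∀ v : Lp E p μ, compMeasurePreservingL 𝕜 σ hσ v =ᵐ[μ] v ∘ σ := fun v =>
    coeFn_compMeasurePreserving v hσ
  have hA'σ : ∀ᵐ x ∂μ, A' u (σ x) = ∫ y in s' (σ x), u y ∂μ :=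
    hσ.quasiMeasurePreserving.ae (hA' u)
  filter_upwards [hcomp (A' u), hA'σ, hA (compMeasurePreservingL 𝕜 σ hσ u)]
    with x hRA' hA'x hARx
  calc compMeasurePreservingL 𝕜 σ hσ (A' u) x = ∫ y in s' (σ x), u y ∂μ := hRA'.trans hA'x
    _ = ∫ y in s x, u (σ y) ∂μ := by
      rw [← hs, hσ.setIntegral_preimage_emb σ.measurableEmbedding]
    _ = ∫ y in s x, compMeasurePreservingL 𝕜 σ hσ u y ∂μ :=
      integral_congr_ae (ae_restrict_of_ae (hcomp u).symm)
    _ = A (compMeasurePreservingL 𝕜 σ hσ u) x := hARx.symm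

theorem isIdempotentElem_of_ae_eq_integral [CompleteSpace E] [IsProbabilityMeasure μ]
    {P : Lp E p μ →L[𝕜] Lp E p μ} (hP : ∀ u : Lp E p μ, ∀ᵐ x ∂μ, P u x = ∫ y, u y ∂μ) :
    IsIdempotentElem P := by
  refine ContinuousLinearMap.ext fun u => Lp.ext ?_
  have hmean : ∫ y, P u y ∂μ = ∫ y, u y ∂μ := by
    rw [integral_congr_ae (hP u), integral_const, probReal_univ, one_smul]
  filter_upwards [hP (P u), hP u] with x hPPx hPx
  exact hPPx.trans (hmean.trans hPx.symm)

end MeasureTheory.Lp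

def cubeReflection (d : ℕ) : (Fin d → ℝ) ≃ᵐ (Fin d → ℝ) :=
  MeasurableEquiv.subLeft 1

@[simp]
theorem coe_cubeReflection (d : ℕ) : ⇑(cubeReflection d) = fun x => 1 - x :=
  rfl

theorem cubeReflection_involutive (d : ℕ) : Function.Involutive (cubeReflection d) :=
  sub_sub_cancel 1

theorem cubeMeasure_eq_restrict (d : ℕ) :
    cubeMeasure d = volume.restrict (Set.Icc (0 : Fin d → ℝ) 1) := by
  rw [cubeMeasure, ← Set.pi_univ_Icc, volume_pi, Measure.restrict_pi_pi]
  rfl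

instance (d : ℕ) : IsProbabilityMeasure (cubeMeasure d) :=
  ⟨by simp [cubeMeasure_eq_restrict, Real.volume_Icc_pi]⟩

theorem measurePreserving_cubeReflection (d : ℕ) :
    MeasurePreserving (cubeReflection d) (cubeMeasure d) (cubeMeasure d) := by
  have h := (Measure.measurePreserving_sub_left volume (1 : Fin d → ℝ)).restrict_preimage
    (measurableSet_Icc (a := 0) (b := 1))
  rwa [Set.preimage_const_sub_Icc, sub_zero, sub_self, ← cubeMeasure_eq_restrict,
    ← coe_cubeReflection] at h

theorem statement15_general (d : ℕ) (n : ℕ)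
    (T Tstar P : Lp ℂ 2 (cubeMeasure d) →L[ℂ] Lp ℂ 2 (cubeMeasure d))
    (hT : ∀ u : Lp ℂ 2 (cubeMeasure d), ∀ᵐ x ∂(cubeMeasure d),
      T u x = ∫ y in Set.Icc 0 x, u y ∂(cubeMeasure d))
    (hTstar : ∀ u : Lp ℂ 2 (cubeMeasure d), ∀ᵐ x ∂(cubeMeasure d),
      Tstar u x = ∫ y in Set.Icc x 1, u y ∂(cubeMeasure d))
    (hP : ∀ u : Lp ℂ 2 (cubeMeasure d), ∀ᵐ x ∂(cubeMeasure d),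
      P u x = ∫ y, u y ∂(cubeMeasure d)) :
    SameNonzeroEigenvalues
      (T ^ (n + 1) * (1 - P) * Tstar ^ (n + 1))
      ((1 - P) * T ^ (n + 1) * Tstar ^ (n + 1) * (1 - P)) := by
  have hσ := measurePreserving_cubeReflection d
  set R : Lp ℂ 2 (cubeMeasure d) →L[ℂ] Lp ℂ 2 (cubeMeasure d) :=
    Lp.compMeasurePreservingL ℂ (cubeReflection d) hσ
  have hRR : R * R = 1 := Lp.compMeasurePreservingL_mul_self hσ (cubeReflection_involutive d)
  have hRT : SemiconjBy R T Tstar := Lp.semiconjBy_compMeasurePreservingL_of_setIntegral hσ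
    (fun x => by simp) hTstar hT
  have hRTstar : SemiconjBy R Tstar T := Lp.semiconjBy_compMeasurePreservingL_of_setIntegral hσ
    (fun x => by simp) hT hTstar
  have hRP : Commute R P := Lp.semiconjBy_compMeasurePreservingL_of_setIntegral hσ
    (s := fun _ => Set.univ) (s' := fun _ => Set.univ) (fun _ => rfl)
    (by simpa using hP) (by simpa using hP)
  exact .pow_mul_mul_pow_of_semiconjBy ⟨⟨R, R, hRR, hRR⟩, rfl⟩ hRT hRTstar
    ((Commute.one_right R).sub_right hRP) (Lp.isIdempotentElem_of_ae_eq_integral hP).one_sub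
    (n + 1)

/-- For every `n ≥ 0`, the operators `𝐓ⁿ⁺¹(𝐈-𝐏)(𝐓*)ⁿ⁺¹` (covariance of the `n`-times
left-integrated pinned Brownian sheet) and `(𝐈-𝐏)𝐓ⁿ⁺¹(𝐓*)ⁿ⁺¹(𝐈-𝐏)` (covariance of the
centered `n`-times left-integrated Brownian sheet) on `L²([0,1]^d)` have the same nonzero
eigenvalues with multiplicities. -/
theorem statement15 (d : ℕ) (hd : 1 ≤ d) (n : ℕ)
    (T Tstar P : Lp ℂ 2 (cubeMeasure d) →L[ℂ] Lp ℂ 2 (cubeMeasure d))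
    (hT : ∀ u : Lp ℂ 2 (cubeMeasure d), ∀ᵐ x ∂(cubeMeasure d),
      T u x = ∫ y in Set.Icc 0 x, u y ∂(cubeMeasure d))
    (hTstar : ∀ u : Lp ℂ 2 (cubeMeasure d), ∀ᵐ x ∂(cubeMeasure d),
      Tstar u x = ∫ y in Set.Icc x 1, u y ∂(cubeMeasure d))
    (hP : ∀ u : Lp ℂ 2 (cubeMeasure d), ∀ᵐ x ∂(cubeMeasure d),
      P u x = ∫ y, u y ∂(cubeMeasure d)) :
    SameNonzeroEigenvalues
      (T ^ (n + 1) * (1 - P) * Tstar ^ (n + 1))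
      ((1 - P) * T ^ (n + 1) * Tstar ^ (n + 1) * (1 - P)) :=
  statement15_general d n T Tstar P hT hTstar hP
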